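/- Suppose the coefficients (p_{k,n}) satisfy the recursion p_{k,n} = Σ_{j=1}^{k−1} Σ_{ℓ=0}^{n} G_{k−j,j} p_{k−j,ℓ} p_{j,n−ℓ} + 2Σ_{j=1}^{n} Σ_{ℓ=0}^{n−j} G_{k+j,−j} p_{k+j,ℓ} p_{j,n−(j+ℓ)} for all k ≥ 1 and n ≥ 0, and that p_{2,n} = γ₂ δ_{n,0}. Then necessarily p_{1,0} = 0 and p_{1,1} = 0; that is, the recursion at k = 1 is inconsistent with the representation p_{1,n} = δ_{n,0}, and the first possibly non-vanishing coefficient for a₁ is p_{1,2} = 2G_{3,−2} p_{3,0} p_{2,0}. -/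

import Mathlib

/-!
At `k = 1` the sum over splittings `k = (k - j) + j` is empty, and every remaining term
`G_{1+j,-j} p_{1+j,ℓ} p_{j,n-j-ℓ}` has `j ≤ n`. For `n = 0` there is no term at all; for `n = 1` the
only term carries the factor `p_{1,0}`; for `n = 2` the terms with `j = 1` carry `p_{1,0}` or
`p_{1,1}`, leaving only `j = 2`, `ℓ = 0`.
-/

open Real

/-- Maxwellian kernel transform: `Γ(u) = sin(πu)/(πu)` for `u ≠ 0`, `Γ(0) = 1`. -/
noncomputable def Gam (u : ℝ) : ℝ :=
  if u = 0 then 1 else Real.sin (π * u) / (π * u)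

/-- `G_{i,j} = γ_{i+j} Γ((i-j)/2) / (1 - 2γ_{i+j}Γ((i+j)/2))`. -/
noncomputable def Gc (γ : ℤ → ℝ) (i j : ℤ) : ℝ :=
  γ (i + j) * Gam (((i : ℝ) - (j : ℝ)) / 2) / (1 - 2 * γ (i + j) * Gam (((i : ℝ) + (j : ℝ)) / 2))

theorem coeff_one_eq {γ : ℤ → ℝ} {p : ℕ → ℕ → ℝ}
    (hrec : ∀ k : ℕ, 1 ≤ k → ∀ n : ℕ,
      p k n = (∑ j ∈ Finset.Ico 1 k, ∑ l ∈ Finset.range (n + 1),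
          Gc γ ((k : ℤ) - (j : ℤ)) (j : ℤ) * p (k - j) l * p j (n - l))
        + 2 * ∑ j ∈ Finset.Icc 1 n, ∑ l ∈ Finset.range (n - j + 1),
            Gc γ ((k : ℤ) + (j : ℤ)) (-(j : ℤ)) * p (k + j) l * p j (n - (j + l)))
    (n : ℕ) :
    p 1 n = 2 * ∑ j ∈ Finset.Icc 1 n, ∑ l ∈ Finset.range (n - j + 1),
      Gc γ (1 + j) (-j) * p (1 + j) l * p j (n - (j + l)) := by
  simpa using hrec 1 le_rfl n

theorem stmt_19_general
    (γ : ℤ → ℝ) (p : ℕ → ℕ → ℝ)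
    (hrec : ∀ k : ℕ, 1 ≤ k → ∀ n : ℕ,
      p k n = (∑ j ∈ Finset.Ico 1 k, ∑ l ∈ Finset.range (n + 1),
          Gc γ ((k : ℤ) - (j : ℤ)) (j : ℤ) * p (k - j) l * p j (n - l))
        + 2 * ∑ j ∈ Finset.Icc 1 n, ∑ l ∈ Finset.range (n - j + 1),
            Gc γ ((k : ℤ) + (j : ℤ)) (-(j : ℤ)) * p (k + j) l * p j (n - (j + l))) :
    p 1 0 = 0 ∧ p 1 1 = 0 ∧ p 1 2 = 2 * Gc γ 3 (-2) * p 3 0 * p 2 0 := by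
  have h0 : p 1 0 = 0 := by simpa using coeff_one_eq hrec 0
  have h1 : p 1 1 = 0 := by simpa [h0] using coeff_one_eq hrec 1
  refine ⟨h0, h1, ?_⟩
  rw [coeff_one_eq hrec 2]
  simp [Finset.sum_Icc_succ_top, Finset.sum_range_succ, h0, h1, mul_assoc]

/-- If the coefficients `(p_{k,n})` satisfy the recursion
`p_{k,n} = Σ_{j=1}^{k-1}Σ_{ℓ=0}^{n} G_{k-j,j} p_{k-j,ℓ} p_{j,n-ℓ}
  + 2Σ_{j=1}^{n}Σ_{ℓ=0}^{n-j} G_{k+j,-j} p_{k+j,ℓ} p_{j,n-(j+ℓ)}` for all `k ≥ 1`, `n ≥ 0`,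
and `p_{2,n} = γ₂ δ_{n,0}`, then necessarily `p_{1,0} = 0` and `p_{1,1} = 0` (so the recursion
at `k = 1` is inconsistent with `p_{1,n} = δ_{n,0}`), and the first possibly non-vanishing
coefficient for `a₁` is `p_{1,2} = 2G_{3,-2} p_{3,0} p_{2,0}`. -/
theorem stmt_19
    (γ : ℤ → ℝ) (p : ℕ → ℕ → ℝ)
    (hrec : ∀ k : ℕ, 1 ≤ k → ∀ n : ℕ,
      p k n = (∑ j ∈ Finset.Ico 1 k, ∑ l ∈ Finset.range (n + 1),
          Gc γ ((k : ℤ) - (j : ℤ)) (j : ℤ) * p (k - j) l * p j (n - l))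
        + 2 * ∑ j ∈ Finset.Icc 1 n, ∑ l ∈ Finset.range (n - j + 1),
            Gc γ ((k : ℤ) + (j : ℤ)) (-(j : ℤ)) * p (k + j) l * p j (n - (j + l)))
    (hp2 : ∀ n : ℕ, p 2 n = γ 2 * (if n = 0 then 1 else 0)) :
    p 1 0 = 0 ∧ p 1 1 = 0 ∧ p 1 2 = 2 * Gc γ 3 (-2) * p 3 0 * p 2 0 :=
  stmt_19_general γ p hrec
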